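/- Let m ≥ 2 and d ≥ 2 be integers, δ > 0 and η > 1. There exist c₀ > 0 and Q₀ (depending only on m, δ, η) with the following property: for all positive integers q, u, v, N and every integer b, if q ≥ Q₀, q = u v², v > q^δ, and (log N)/(log q) > η, then for every nonnegative function f ∈ C_c^∞(ℝ^{m−1}), R^{(m)}(N, d, b/q, f) ≥ c₀ f(0) (N v / q)^m / N. -/

import Mathlib

open Filter MeasureTheory
open scoped BigOperators Classical

/-- The `m`-level correlation sum `R^(m)(N, 𝒩, f)` of a sequence `x` (the paper's
`F_N` is unfolded as a sum over the integer lattice). -/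
noncomputable def corrGen (m N : ℕ) (x : ℕ → ℝ) (f : (Fin (m - 1) → ℝ) → ℝ) : ℝ :=
  (1 / (N : ℝ)) *
    ∑ n ∈ (Fintype.piFinset fun _ : Fin m => Finset.Icc 1 N).filter
        (fun n => Function.Injective n),
      ∑' ℓ : Fin (m - 1) → ℤ,
        f (fun i =>
          (N : ℝ) * ((ℓ i : ℝ) +
            (x (n ⟨i.1, by have := i.isLt; omega⟩) -
             x (n ⟨i.1 + 1, by have := i.isLt; omega⟩))))

/-- `f ∈ C_c^∞(ℝ^m)`. -/
def SmoothCpt (m : ℕ) (f : (Fin m → ℝ) → ℝ) : Prop :=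
  ContDiff ℝ (⊤ : ℕ∞) f ∧ HasCompactSupport f

/-- The `m`-level correlation sum `R^(m)(N, d, α, f)` of `n^d α mod 1`. -/
noncomputable def corrPow (m N d : ℕ) (α : ℝ) (f : (Fin (m - 1) → ℝ) → ℝ) : ℝ :=
  corrGen m N (fun n => (n : ℝ) ^ d * α) f

/-- `n^d α mod 1` is Poissonian along the sequence `Nseq`. -/
def PoissonianAlong (d : ℕ) (α : ℝ) (Nseq : ℕ → ℕ) : Prop :=
  ∀ m : ℕ, 2 ≤ m → ∀ f : (Fin (m - 1) → ℝ) → ℝ, SmoothCpt (m - 1) f →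
    Tendsto (fun j => corrPow m (Nseq j) d α f) atTop
      (nhds (∫ y : Fin (m - 1) → ℝ, f y))

/-- `n^d α mod 1` is Poissonian with respect to the sequence of rationals `b j / q j`. -/
def PoissonianWrt (d : ℕ) (α : ℝ) (q : ℕ → ℕ) : Prop :=
  ∃ Nseq : ℕ → ℕ, Tendsto Nseq atTop atTop ∧
    Tendsto (fun j => Real.log (Nseq j) / Real.log (q j)) atTop (nhds 1) ∧
    PoissonianAlong d α Nseq

lemma summable_aux {k : ℕ} (f : (Fin k → ℝ) → ℝ) (hf : HasCompactSupport f)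
    (N : ℕ) (hN : 0 < N) (r : Fin k → ℝ) :
    Summable (fun ℓ : Fin k → ℤ => f (fun i => (N : ℝ) * ((ℓ i : ℝ) + r i))) := by
  obtain ⟨R, hR⟩ := hf.isBounded.subset_closedBall 0
  apply summable_of_finite_support
  have hfin : ∀ i : Fin k, {z : ℤ | (z : ℝ) ∈ Set.Icc (-r i - R) (R - r i)}.Finite := by
    intro i
    refine (Set.finite_Icc ⌈-r i - R⌉ ⌊R - r i⌋).subset ?_
    intro z hz
    simp only [Set.mem_setOf_eq, Set.mem_Icc] at hz ⊢
    exact ⟨Int.ceil_le.2 hz.1, Int.le_floor.2 hz.2⟩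
  refine (Set.Finite.pi (fun i => hfin i)).subset ?_
  intro ℓ hℓ
  have hmem : (fun i => (N : ℝ) * ((ℓ i : ℝ) + r i)) ∈ Metric.closedBall 0 R :=
    hR (subset_tsupport _ hℓ)
  rw [Metric.mem_closedBall, dist_zero_right] at hmem
  intro i _
  have h1 : |(N : ℝ) * ((ℓ i : ℝ) + r i)| ≤ R :=
    le_trans (norm_le_pi_norm (fun i => (N : ℝ) * ((ℓ i : ℝ) + r i)) i) hmem
  have hN1 : (1 : ℝ) ≤ N := by exact_mod_cast hN
  have h2 : |((ℓ i : ℝ) + r i)| ≤ R := by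
    rw [abs_mul, abs_of_nonneg (by linarith : (0:ℝ) ≤ (N:ℝ))] at h1
    nlinarith [abs_nonneg ((ℓ i : ℝ) + r i)]
  rw [abs_le] at h2
  simp only [Set.mem_setOf_eq, Set.mem_Icc]
  constructor <;> linarith [h2.1, h2.2]

theorem statement14 (m : ℕ) (hm : 2 ≤ m)
    (δ η : ℝ) (hδ : 0 < δ) (hη : 1 < η) :
    ∃ c₀ : ℝ, 0 < c₀ ∧ ∃ Q₀ : ℕ,
      ∀ d : ℕ, 2 ≤ d →
        ∀ q u v N : ℕ, ∀ b : ℤ,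
          Q₀ ≤ q → 0 < u → 0 < v → 0 < N →
          q = u * v ^ 2 → (q : ℝ) ^ δ < (v : ℝ) →
          η < Real.log N / Real.log q →
          ∀ f : (Fin (m - 1) → ℝ) → ℝ, SmoothCpt (m - 1) f → (∀ y, 0 ≤ f y) →
            c₀ * f 0 * (((N : ℝ) * (v : ℝ)) / (q : ℝ)) ^ m / (N : ℝ) ≤
              corrPow m N d ((b : ℝ) / (q : ℝ)) f := by
  refine ⟨(1 / (2 * m : ℝ)) ^ m, by positivity,
    ⟨⌈((4 * m : ℝ)) ^ ((1:ℝ) / (η - 1))⌉₊ + 2, ?_⟩⟩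
  intro d hd q u v N b hQq hu hv hN hquv hvq hlog f hf hf0
  obtain ⟨d', rfl⟩ : ∃ d', d = d' + 2 := ⟨d - 2, by omega⟩
  have hη1 : (0:ℝ) < η - 1 := by linarith
  have hmpos : 0 < m := by omega
  have hq2 : 2 ≤ q := by omega
  have hqpos : (0:ℝ) < (q:ℝ) := by positivity
  have hNpos : (0:ℝ) < (N:ℝ) := by exact_mod_cast hN
  -- basic real bound: 4m ≤ q^(η-1)
  have hceil : ((4 * m : ℝ)) ^ ((1:ℝ) / (η - 1)) ≤ (q:ℝ) := by
    have h1 : (⌈((4 * m : ℝ)) ^ ((1:ℝ) / (η - 1))⌉₊ : ℝ) ≤ (q:ℝ) := by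
      exact_mod_cast (by omega : ⌈((4 * m : ℝ)) ^ ((1:ℝ) / (η - 1))⌉₊ ≤ q)
    exact le_trans (Nat.le_ceil _) h1
  have h4m : (0:ℝ) ≤ 4 * m := by positivity
  have hQ : (4 * m : ℝ) ≤ (q:ℝ) ^ (η - 1) := by
    have := Real.rpow_le_rpow (Real.rpow_nonneg h4m _) hceil (le_of_lt hη1)
    rwa [← Real.rpow_mul h4m, one_div, inv_mul_cancel₀ (ne_of_gt hη1), Real.rpow_one] at this
  -- N > q^η
  have hlogq : (0:ℝ) < Real.log q := Real.log_pos (by exact_mod_cast hq2)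
  have hlogN : η * Real.log q < Real.log N := (lt_div_iff₀ hlogq).1 hlog
  have hNq : (q:ℝ) ^ (η:ℝ) < (N:ℝ) := by
    rw [Real.rpow_def_of_pos hqpos]
    calc Real.exp (Real.log q * η) < Real.exp (Real.log N) := by
          apply Real.exp_lt_exp.2; linarith [hlogN]
      _ = (N:ℝ) := Real.exp_log hNpos
  -- W, K, T
  set W := u * v with hW
  have hWpos : 0 < W := Nat.mul_pos hu hv
  have hWR : (0:ℝ) < (W:ℝ) := by exact_mod_cast hWpos
  set K := N / W with hK
  set T := K / m with hT
  have hqW : q = W * v := by rw [hquv, hW]; ring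
  have hWq : W ≤ q := by
    rw [hqW]; exact Nat.le_mul_of_pos_right W hv
  -- X := N/W and its bound
  set X := (N:ℝ) / (W:ℝ) with hX
  have hvR : (0:ℝ) < (v:ℝ) := by exact_mod_cast hv
  have hXeq : ((N : ℝ) * (v : ℝ)) / (q : ℝ) = X := by
    rw [hX, hqW]
    push_cast
    field_simp
  have hX4 : (4 * m : ℝ) ≤ X := by
    have hq_pow : (q:ℝ) ^ (η - 1 : ℝ) = (q:ℝ) ^ (η:ℝ) / (q:ℝ) := by
      rw [Real.rpow_sub hqpos, Real.rpow_one]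
    have h1 : (q:ℝ) ^ (η - 1 : ℝ) < (N:ℝ) / (q:ℝ) := by
      rw [hq_pow]
      gcongr
    have h2 : (N:ℝ) / (q:ℝ) ≤ X := by
      rw [hX]
      gcongr
      all_goals first
        | exact le_of_lt hNpos
        | exact_mod_cast hWq
    linarith
  -- Nat division facts
  obtain ⟨r, hr, hNr⟩ : ∃ r, r < W ∧ N = W * K + r :=
    ⟨N % W, Nat.mod_lt _ hWpos, by rw [hK, Nat.div_add_mod]⟩
  obtain ⟨s, hs, hKs⟩ : ∃ s, s < m ∧ K = m * T + s :=
    ⟨K % m, Nat.mod_lt _ hmpos, by rw [hT, Nat.div_add_mod]⟩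
  -- real bound on T
  have hTX : X / (2 * m) ≤ (T:ℝ) := by
    have h1 : (N:ℝ) = (W:ℝ) * (K:ℝ) + (r:ℝ) := by exact_mod_cast hNr
    have h2 : (K:ℝ) = (m:ℝ) * (T:ℝ) + (s:ℝ) := by exact_mod_cast hKs
    have h3 : (r:ℝ) < (W:ℝ) := by exact_mod_cast hr
    have h4 : (s:ℝ) < (m:ℝ) := by exact_mod_cast hs
    have h5 : X < (K:ℝ) + 1 := by
      rw [hX, div_lt_iff₀ hWR]; nlinarith
    have hm2 : (2:ℝ) ≤ (m:ℝ) := by exact_mod_cast hm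
    have hs1 : (s:ℝ) + 1 ≤ (m:ℝ) := by exact_mod_cast hs
    rw [div_le_iff₀ (show (0:ℝ) < 2 * (m:ℝ) by positivity)]
    have hP : X < (m:ℝ) * (T:ℝ) + (m:ℝ) := by linarith
    linarith
  -- main combinatorial bound
  set α : ℝ := (b:ℝ) / (q:ℝ) with hα
  set S := Fintype.piFinset (fun _ : Fin m => Finset.Icc 1 T) with hS
  set e : (Fin m → ℕ) → (Fin m → ℕ) := fun c i => W * (c i + i.1 * T) with he
  set A := (Fintype.piFinset fun _ : Fin m => Finset.Icc 1 N).filter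
      (fun n => Function.Injective n) with hA
  set G : (Fin m → ℕ) → ℝ := fun n =>
      ∑' ℓ : Fin (m - 1) → ℤ,
        f (fun i =>
          (N : ℝ) * ((ℓ i : ℝ) +
            (((n ⟨i.1, by have := i.isLt; omega⟩ : ℕ) : ℝ) ^ (d' + 2) * α -
             ((n ⟨i.1 + 1, by have := i.isLt; omega⟩ : ℕ) : ℝ) ^ (d' + 2) * α))) with hG
  have hcb : ∀ c ∈ S, ∀ i : Fin m, 1 ≤ c i ∧ c i ≤ T := by
    intro c hc i
    exact Finset.mem_Icc.1 (Fintype.mem_piFinset.1 hc i)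
  have hkey : ∀ c ∈ S, ∀ i j : Fin m, i.1 < j.1 → c i + i.1 * T < c j + j.1 * T := by
    intro c hc i j hij
    obtain ⟨h1, h2⟩ := hcb c hc i
    obtain ⟨h3, h4⟩ := hcb c hc j
    have h5 : (i.1 + 1) * T ≤ j.1 * T := Nat.mul_le_mul_right T (by omega)
    rw [add_mul, one_mul] at h5
    omega
  have hmT : W * (m * T) ≤ N := by
    calc W * (m * T) ≤ W * K := Nat.mul_le_mul_left W (by omega)
      _ ≤ N := by omega
  have he_mem : ∀ c ∈ S, e c ∈ A := by
    intro c hc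
    rw [hA, Finset.mem_filter]
    constructor
    · rw [Fintype.mem_piFinset]
      intro i
      obtain ⟨h1, h2⟩ := hcb c hc i
      rw [Finset.mem_Icc]
      constructor
      · have h0 : 1 ≤ c i + i.1 * T := by omega
        calc 1 ≤ W * 1 := by omega
          _ ≤ W * (c i + i.1 * T) := Nat.mul_le_mul_left W h0
      · have hi : i.1 + 1 ≤ m := i.isLt
        have h5 : i.1 * T ≤ (m - 1) * T := Nat.mul_le_mul_right T (by omega)
        have h6 : (m - 1) * T + T = m * T := by
          have h7 : m - 1 + 1 = m := by omega
          calc (m-1) * T + T = (m - 1 + 1) * T := by ring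
            _ = m * T := by rw [h7]
        have h7 : c i + i.1 * T ≤ m * T := by omega
        calc W * (c i + i.1 * T) ≤ W * (m * T) := Nat.mul_le_mul_left W h7
          _ ≤ N := hmT
    · intro i j hij
      simp only [he] at hij
      have h0 : c i + i.1 * T = c j + j.1 * T := Nat.eq_of_mul_eq_mul_left hWpos hij
      rcases lt_trichotomy i.1 j.1 with h | h | h
      · exact absurd h0 (Nat.ne_of_lt (hkey c hc i j h))
      · exact Fin.ext h
      · exact absurd h0.symm (Nat.ne_of_lt (hkey c hc j i h))
  have he_inj : ∀ c₁ ∈ S, ∀ c₂ ∈ S, e c₁ = e c₂ → c₁ = c₂ := by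
    intro c₁ _ c₂ _ h
    funext i
    have h1 := congrFun h i
    simp only [he] at h1
    have h2 := Nat.eq_of_mul_eq_mul_left hWpos h1
    omega
  -- value of x on multiples of W
  have hx : ∀ (t : ℕ), ((W * t : ℕ) : ℝ) ^ (d' + 2) * α
      = (((u:ℤ) ^ (d' + 1) * (v:ℤ) ^ d' * (t:ℤ) ^ (d' + 2) * b : ℤ) : ℝ) := by
    intro t
    have huR : (0:ℝ) < (u:ℝ) := by exact_mod_cast hu
    rw [hα, hquv, hW]
    push_cast
    field_simp
    ring
  -- per-tuple lower bound
  have hterm : ∀ c ∈ S, f 0 ≤ G (e c) := by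
    intro c hc
    rw [hG]
    set z : Fin m → ℤ := fun i =>
      (u:ℤ) ^ (d' + 1) * (v:ℤ) ^ d' * ((c i + i.1 * T : ℕ) : ℤ) ^ (d' + 2) * b with hz
    have hxz : ∀ i : Fin m, ((e c i : ℕ) : ℝ) ^ (d' + 2) * α = ((z i : ℤ) : ℝ) := by
      intro i
      simp only [he, hz]
      exact hx (c i + i.1 * T)
    set ℓ₀ : Fin (m - 1) → ℤ := fun i =>
      z ⟨i.1 + 1, by have := i.isLt; omega⟩ - z ⟨i.1, by have := i.isLt; omega⟩ with hℓ₀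
    have hsm := summable_aux f hf.2 N hN (fun i =>
      ((e c ⟨i.1, by have := i.isLt; omega⟩ : ℕ) : ℝ) ^ (d' + 2) * α -
      ((e c ⟨i.1 + 1, by have := i.isLt; omega⟩ : ℕ) : ℝ) ^ (d' + 2) * α)
    have hle := Summable.le_tsum hsm ℓ₀ (fun j _ => hf0 _)
    have hzero : (fun i : Fin (m-1) =>
        (N : ℝ) * ((ℓ₀ i : ℝ) +
          (((e c ⟨i.1, by have := i.isLt; omega⟩ : ℕ) : ℝ) ^ (d' + 2) * α -
           ((e c ⟨i.1 + 1, by have := i.isLt; omega⟩ : ℕ) : ℝ) ^ (d' + 2) * α))) = 0 := by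
      funext i
      simp only [Pi.zero_apply]
      rw [hxz, hxz]
      simp only [hℓ₀]
      push_cast
      ring
    calc f 0 = f (fun i : Fin (m-1) =>
        (N : ℝ) * ((ℓ₀ i : ℝ) +
          (((e c ⟨i.1, by have := i.isLt; omega⟩ : ℕ) : ℝ) ^ (d' + 2) * α -
           ((e c ⟨i.1 + 1, by have := i.isLt; omega⟩ : ℕ) : ℝ) ^ (d' + 2) * α))) := by
          rw [hzero]
      _ ≤ _ := hle
  have hg0 : ∀ n : Fin m → ℕ, (0:ℝ) ≤ G n := by
    intro n
    rw [hG]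
    exact tsum_nonneg (fun ℓ => hf0 _)
  have hcardn : S.card = T ^ m := by
    rw [hS, Fintype.card_piFinset]
    simp [Nat.card_Icc]
  have hsum_lb : (T:ℝ) ^ m * f 0 ≤ ∑ n ∈ A, G n := by
    calc (T:ℝ) ^ m * f 0 = ∑ _c ∈ S, f 0 := by
          rw [Finset.sum_const, hcardn, nsmul_eq_mul]
          push_cast
          ring
      _ ≤ ∑ c ∈ S, G (e c) := Finset.sum_le_sum hterm
      _ = ∑ n ∈ S.image e, G n := (Finset.sum_image he_inj).symm
      _ ≤ _ := by
          apply Finset.sum_le_sum_of_subset_of_nonneg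
          · intro n hn
            obtain ⟨c, hc, rfl⟩ := Finset.mem_image.1 hn
            exact he_mem c hc
          · intro n _ _
            exact hg0 n
  -- conclude
  unfold corrPow corrGen
  rw [hXeq]
  have hXpos : (0:ℝ) ≤ X := by positivity
  have h1N : (0:ℝ) ≤ 1 / (N:ℝ) := by positivity
  have hfinal : (1 / (2 * m : ℝ)) ^ m * f 0 * X ^ m ≤ (T:ℝ) ^ m * f 0 := by
    have h1 : (1 / (2 * m : ℝ)) ^ m * X ^ m = (X / (2 * m)) ^ m := by
      rw [← mul_pow]; ring_nf
    have h2 : (X / (2 * m)) ^ m ≤ (T:ℝ) ^ m :=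
      pow_le_pow_left₀ (by positivity) hTX m
    calc (1 / (2 * m : ℝ)) ^ m * f 0 * X ^ m
        = (1 / (2 * m : ℝ)) ^ m * X ^ m * f 0 := by ring
      _ = (X / (2 * m)) ^ m * f 0 := by rw [h1]
      _ ≤ (T:ℝ) ^ m * f 0 := mul_le_mul_of_nonneg_right h2 (hf0 0)
  exact calc (1 / (2 * m : ℝ)) ^ m * f 0 * X ^ m / (N:ℝ)
      = (1 / (N:ℝ)) * ((1 / (2 * m : ℝ)) ^ m * f 0 * X ^ m) := by ring
    _ ≤ (1 / (N:ℝ)) * ((T:ℝ) ^ m * f 0) := mul_le_mul_of_nonneg_left hfinal h1N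
    _ ≤ (1 / (N:ℝ)) * (∑ n ∈ A, G n) :=
        mul_le_mul_of_nonneg_left hsum_lb h1N
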